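/- Let A, B ∈ Sym_m with λ(A) ∈ Γ and B − A positive semidefinite. Then λ(B) ∈ Γ and f(λ(B)) ≥ f(λ(A)); moreover, if B − A is positive definite then f(λ(B)) > f(λ(A)). -/

import Mathlib

open Filter Topology Matrix

attribute [local instance] Matrix.normedAddCommGroup Matrix.normedSpace

/-- The real vector space `Sym_m` of symmetric `m × m` real matrices, as a submodule of
the space of all `m × m` real matrices. -/
def SymMat (m : ℕ) : Submodule ℝ (Matrix (Fin m) (Fin m) ℝ) where
  carrier := {A | A.IsSymm}
  add_mem' := fun {A B} hA hB => by
    simp only [Set.mem_setOf_eq, Matrix.IsSymm, Matrix.transpose_add] at *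
    rw [hA, hB]
  zero_mem' := by simp [Matrix.IsSymm]
  smul_mem' := fun c A hA => by
    simp only [Set.mem_setOf_eq, Matrix.IsSymm, Matrix.transpose_smul] at *
    rw [hA]

/-- A real symmetric matrix is Hermitian. -/
theorem IsSymm.isHermitianR {m : ℕ} {A : Matrix (Fin m) (Fin m) ℝ} (hA : A.IsSymm) :
    A.IsHermitian := by
  rw [Matrix.IsHermitian, Matrix.conjTranspose_eq_transpose_of_trivial]
  exact hA

/-- The eigenvalue vector `λ(A) ∈ ℝ^m` of a symmetric matrix `A ∈ Sym_m` (the eigenvalues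
repeated according to multiplicity). -/
noncomputable def eigVec {m : ℕ} (A : SymMat m) : Fin m → ℝ :=
  (IsSymm.isHermitianR A.2).eigenvalues

/-- The `i`-th partial derivative `fᵢ(x) = ∂f/∂λᵢ(x)`. -/
noncomputable def pd {m : ℕ} (f : (Fin m → ℝ) → ℝ) (x : Fin m → ℝ) (i : Fin m) : ℝ :=
  fderiv ℝ f x (Pi.single i 1)

/-- The second partial derivative `∂²f/∂λᵢ∂λⱼ(x)`. -/
noncomputable def pd2 {m : ℕ} (f : (Fin m → ℝ) → ℝ) (x : Fin m → ℝ) (i j : Fin m) : ℝ :=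
  fderiv ℝ (fun y => fderiv ℝ f y (Pi.single j 1)) x (Pi.single i 1)

/-! Weyl's monotonicity: if `B - A` is positive semidefinite, the `k`-th largest eigenvalue of
`A` is at most that of `B`. Indeed the span of the top `k + 1` eigenvectors of `A` meets the span
of the bottom `m - k` eigenvectors of `B`, and a common unit vector `x` gives
`λₖ(A) ≤ ⟪Ax, x⟫ ≤ ⟪Bx, x⟫ ≤ λₖ(B)`, with the middle inequality strict when `B - A` is positive
definite. An open convex cone containing the positive orthant is an upper set, so `λ(B) ∈ Γ`, and
positivity of the partial derivatives makes `f` strictly increasing along the segment from `λ(A)`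
to `λ(B)`. -/

open Module Submodule RCLike
open scoped ComplexOrder

lemma LinearIndependent.finrank_span_image {K M ι : Type*} [DivisionRing K] [AddCommGroup M]
    [Module K M] {v : ι → M} (hv : LinearIndependent K v) (s : Finset ι) :
    finrank K (span K (v '' s)) = s.card := by
  rw [Set.image_eq_range]
  exact (finrank_span_eq_card (hv.comp _ Subtype.val_injective)).trans (Fintype.card_coe s)

namespace OrthonormalBasis

variable {𝕜 E ι : Type*} [RCLike 𝕜] [NormedAddCommGroup E] [InnerProductSpace 𝕜 E] [Fintype ι]

lemma repr_apply_eq_zero_of_mem_span (b : OrthonormalBasis ι 𝕜 E) {s : Set ι} {x : E}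
    (hx : x ∈ span 𝕜 (b '' s)) {i : ι} (hi : i ∉ s) : b.repr x i = 0 := by
  rw [← b.coe_toBasis] at hx
  rw [← b.coe_toBasis_repr_apply]
  exact Finsupp.notMem_support_iff.mp fun h => hi (b.toBasis.mem_span_image.mp hx h)

lemma norm_sq_eq_sum_norm_sq_repr (b : OrthonormalBasis ι 𝕜 E) (x : E) :
    ‖x‖ ^ 2 = ∑ i, ‖b.repr x i‖ ^ 2 := by
  rw [← b.repr.norm_map, EuclideanSpace.norm_sq_eq]

end OrthonormalBasis

namespace LinearMap.IsSymmetric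

variable {𝕜 E : Type*} [RCLike 𝕜] [NormedAddCommGroup E] [InnerProductSpace 𝕜 E]
  [FiniteDimensional 𝕜 E] {n : ℕ} {T S : E →ₗ[𝕜] E}

lemma re_inner_apply_self_eq_sum (hT : T.IsSymmetric) (hn : finrank 𝕜 E = n) (x : E) :
    re (inner 𝕜 (T x) x) =
      ∑ i, hT.eigenvalues hn i * ‖(hT.eigenvectorBasis hn).repr x i‖ ^ 2 := by
  rw [← (hT.eigenvectorBasis hn).repr.inner_map_map, PiLp.inner_apply, map_sum]
  refine Finset.sum_congr rfl fun i _ => ?_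
  simp only [eigenvectorBasis_apply_self_apply, RCLike.inner_apply', map_mul, conj_ofReal,
    mul_assoc, RCLike.conj_mul, ← ofReal_pow, re_ofReal_mul, ofReal_re]

lemma eigenvalues_mul_norm_sq_le_re_inner (hT : T.IsSymmetric) (hn : finrank 𝕜 E = n)
    (k : Fin n) {x : E} (hx : x ∈ span 𝕜 (hT.eigenvectorBasis hn '' Set.Iic k)) :
    hT.eigenvalues hn k * ‖x‖ ^ 2 ≤ re (inner 𝕜 (T x) x) := by
  rw [re_inner_apply_self_eq_sum, (hT.eigenvectorBasis hn).norm_sq_eq_sum_norm_sq_repr,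
    Finset.mul_sum]
  refine Finset.sum_le_sum fun i _ => ?_
  by_cases hi : i ≤ k
  · exact mul_le_mul_of_nonneg_right (hT.eigenvalues_antitone hn hi) (sq_nonneg _)
  · simp [(hT.eigenvectorBasis hn).repr_apply_eq_zero_of_mem_span hx hi]

lemma re_inner_le_eigenvalues_mul_norm_sq (hT : T.IsSymmetric) (hn : finrank 𝕜 E = n)
    (k : Fin n) {x : E} (hx : x ∈ span 𝕜 (hT.eigenvectorBasis hn '' Set.Ici k)) :
    re (inner 𝕜 (T x) x) ≤ hT.eigenvalues hn k * ‖x‖ ^ 2 := by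
  rw [re_inner_apply_self_eq_sum, (hT.eigenvectorBasis hn).norm_sq_eq_sum_norm_sq_repr,
    Finset.mul_sum]
  refine Finset.sum_le_sum fun i _ => ?_
  by_cases hi : k ≤ i
  · exact mul_le_mul_of_nonneg_right (hT.eigenvalues_antitone hn hi) (sq_nonneg _)
  · simp [(hT.eigenvectorBasis hn).repr_apply_eq_zero_of_mem_span hx hi]

theorem exists_eigenvalues_mul_norm_sq_le_le (hT : T.IsSymmetric) (hS : S.IsSymmetric)
    (hn : finrank 𝕜 E = n) (k : Fin n) :
    ∃ x ≠ 0, hT.eigenvalues hn k * ‖x‖ ^ 2 ≤ re (inner 𝕜 (T x) x) ∧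
      re (inner 𝕜 (S x) x) ≤ hS.eigenvalues hn k * ‖x‖ ^ 2 := by
  set V := span 𝕜 (hT.eigenvectorBasis hn '' Finset.Iic k)
  set W := span 𝕜 (hS.eigenvectorBasis hn '' Finset.Ici k)
  have hVW : ¬ Disjoint V W := fun h => by
    have := Submodule.finrank_add_finrank_le_of_disjoint h
    rw [(hT.eigenvectorBasis hn).orthonormal.linearIndependent.finrank_span_image,
      (hS.eigenvectorBasis hn).orthonormal.linearIndependent.finrank_span_image, Fin.card_Iic,
      Fin.card_Ici, hn] at this
    omega
  obtain ⟨x, hxV, hxW, hx0⟩ : ∃ x ∈ V, x ∈ W ∧ x ≠ 0 := by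
    simpa [Submodule.disjoint_def] using hVW
  refine ⟨x, hx0, hT.eigenvalues_mul_norm_sq_le_re_inner hn k ?_,
    hS.re_inner_le_eigenvalues_mul_norm_sq hn k ?_⟩
  · simpa [V] using hxV
  · simpa [W] using hxW

theorem eigenvalues_le_of_isPositive_sub (hT : T.IsSymmetric) (hS : S.IsSymmetric)
    (hn : finrank 𝕜 E = n) (hTS : (S - T).IsPositive) (k : Fin n) :
    hT.eigenvalues hn k ≤ hS.eigenvalues hn k := by
  obtain ⟨x, hx0, hTx, hSx⟩ := exists_eigenvalues_mul_norm_sq_le_le hT hS hn k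
  have := hTS.re_inner_nonneg_left x
  rw [sub_apply, inner_sub_left, map_sub, sub_nonneg] at this
  exact le_of_mul_le_mul_right (by linarith) (pow_pos (norm_pos_iff.2 hx0) 2)

theorem eigenvalues_lt_of_re_inner_lt (hT : T.IsSymmetric) (hS : S.IsSymmetric)
    (hn : finrank 𝕜 E = n) (hTS : ∀ x ≠ 0, re (inner 𝕜 (T x) x) < re (inner 𝕜 (S x) x))
    (k : Fin n) : hT.eigenvalues hn k < hS.eigenvalues hn k := by
  obtain ⟨x, hx0, hTx, hSx⟩ := exists_eigenvalues_mul_norm_sq_le_le hT hS hn k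
  exact lt_of_mul_lt_mul_right (by linarith [hTS x hx0]) (sq_nonneg ‖x‖)

end LinearMap.IsSymmetric

namespace Matrix

open WithLp

variable {𝕜 n : Type*} [RCLike 𝕜] [Fintype n] [DecidableEq n] {A B : Matrix n n 𝕜}

lemma re_inner_toEuclideanLin_apply_self (M : Matrix n n 𝕜) (x : EuclideanSpace 𝕜 n) :
    re (inner 𝕜 (toEuclideanLin M x) x) = re (star (ofLp x) ⬝ᵥ (M *ᵥ ofLp x)) := by
  rw [inner_re_symm, EuclideanSpace.inner_eq_star_dotProduct, dotProduct_comm]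
  rfl

/- `hA.eigenvalues` and `hB.eigenvalues` list the decreasingly sorted eigenvalues through the same
reindexing `Fin (card n) ≃ n`, so Weyl's inequality holds entrywise. -/
theorem IsHermitian.eigenvalues_le_of_posSemidef_sub (hA : A.IsHermitian) (hB : B.IsHermitian)
    (hAB : (B - A).PosSemidef) (i : n) : hA.eigenvalues i ≤ hB.eigenvalues i := by
  unfold eigenvalues eigenvalues₀
  refine LinearMap.IsSymmetric.eigenvalues_le_of_isPositive_sub _ _ _ ?_ _
  rwa [← map_sub, isPositive_toEuclideanLin_iff]

theorem IsHermitian.eigenvalues_lt_of_posDef_sub (hA : A.IsHermitian) (hB : B.IsHermitian)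
    (hAB : (B - A).PosDef) (i : n) : hA.eigenvalues i < hB.eigenvalues i := by
  unfold eigenvalues eigenvalues₀
  refine LinearMap.IsSymmetric.eigenvalues_lt_of_re_inner_lt _ _ _ (fun x hx => ?_) _
  have := hAB.re_dotProduct_pos (x := ofLp x) (by simpa using hx)
  rwa [← re_inner_toEuclideanLin_apply_self, map_sub, LinearMap.sub_apply, inner_sub_left,
    map_sub, sub_pos] at this

end Matrix

lemma Convex.add_mem_of_forall_smul_mem {E : Type*} [AddCommGroup E] [Module ℝ E] {Γ : Set E}
    (hconv : Convex ℝ Γ) (hcone : ∀ t : ℝ, 0 < t → ∀ x ∈ Γ, t • x ∈ Γ) {x y : E} (hx : x ∈ Γ)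
    (hy : y ∈ Γ) : x + y ∈ Γ := by
  have := hcone 2 two_pos _ (hconv hx hy (by norm_num : (0 : ℝ) ≤ 1 / 2)
    (by norm_num : (0 : ℝ) ≤ 1 / 2) (by norm_num))
  convert this using 1
  module

lemma IsOpen.isUpperSet_of_convex_of_smul_mem {ι : Type*} {Γ : Set (ι → ℝ)} (hopen : IsOpen Γ)
    (hconv : Convex ℝ Γ) (hcone : ∀ t : ℝ, 0 < t → ∀ x ∈ Γ, t • x ∈ Γ)
    (hpos : {x : ι → ℝ | ∀ i, 0 < x i} ⊆ Γ) : IsUpperSet Γ := by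
  intro x y hxy hx
  have hnear : ∀ᶠ δ in 𝓝 (0 : ℝ), x - δ • (1 : ι → ℝ) ∈ Γ := by
    have hcont : Continuous fun δ : ℝ => x - δ • (1 : ι → ℝ) := by fun_prop
    exact (hcont.tendsto' 0 x (by simp)).eventually (hopen.mem_nhds hx)
  obtain ⟨δ, hδΓ, hδ⟩ :=
    ((hnear.filter_mono nhdsWithin_le_nhds).and (self_mem_nhdsWithin (s := Set.Ioi 0))).exists
  have hshift : y - x + δ • 1 ∈ Γ := hpos fun i => by
    simp only [Pi.add_apply, Pi.sub_apply, Pi.smul_apply, Pi.one_apply, smul_eq_mul, mul_one]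
    linarith [hxy i]
  -- `y = (x - δ • 1) + (y - x + δ • 1)` is a sum of two points of `Γ`.
  simpa using hconv.add_mem_of_forall_smul_mem hcone hδΓ hshift

section Monotone

variable {m : ℕ} {Γ : Set (Fin m → ℝ)} {f : (Fin m → ℝ) → ℝ}

lemma fderiv_apply_eq_sum_pd (x v : Fin m → ℝ) : fderiv ℝ f x v = ∑ i, v i * pd f x i := by
  conv_lhs => rw [← Finset.univ_sum_single v, map_sum]
  refine Finset.sum_congr rfl fun i _ => ?_
  rw [pd, ← smul_eq_mul, ← map_smul, ← Pi.single_smul, smul_eq_mul, mul_one]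

lemma hasDerivAt_apply_add_smul {x v : Fin m → ℝ} {t : ℝ}
    (hf : DifferentiableAt ℝ f (x + t • v)) :
    HasDerivAt (fun s => f (x + s • v)) (∑ i, v i * pd f (x + t • v) i) t := by
  have hline : HasDerivAt (fun s : ℝ => x + s • v) v t := by
    simpa using ((hasDerivAt_id t).smul_const v).const_add x
  rw [← fderiv_apply_eq_sum_pd]
  exact hf.hasFDerivAt.comp_hasDerivAt t hline

theorem strictMonoOn_of_pd_pos (hopen : IsOpen Γ) (hup : IsUpperSet Γ)
    (hf : DifferentiableOn ℝ f Γ) (hpd : ∀ x ∈ Γ, ∀ i, 0 < pd f x i) : StrictMonoOn f Γ := by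
  intro x hx y _ hxy
  set v := y - x
  have hseg : ∀ s ∈ Set.Icc (0 : ℝ) 1, x + s • v ∈ Γ := fun s hs =>
    hup (le_add_of_nonneg_right (smul_nonneg hs.1 (sub_nonneg.2 hxy.le))) hx
  have hderiv : ∀ s ∈ Set.Icc (0 : ℝ) 1,
      HasDerivAt (fun s => f (x + s • v)) (∑ i, v i * pd f (x + s • v) i) s := fun s hs =>
    hasDerivAt_apply_add_smul ((hf _ (hseg s hs)).differentiableAt (hopen.mem_nhds (hseg s hs)))
  have hderiv_pos : ∀ s ∈ Set.Icc (0 : ℝ) 1, 0 < ∑ i, v i * pd f (x + s • v) i := by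
    intro s hs
    obtain ⟨hv, i, hi⟩ := Pi.lt_def.1 (sub_pos.2 hxy)
    exact Finset.sum_pos' (fun j _ => mul_nonneg (hv j) (hpd _ (hseg s hs) j).le)
      ⟨i, Finset.mem_univ i, mul_pos hi (hpd _ (hseg s hs) i)⟩
  have hmono : StrictMonoOn (fun s : ℝ => f (x + s • v)) (Set.Icc 0 1) :=
    strictMonoOn_of_hasDerivWithinAt_pos (convex_Icc 0 1)
      (fun s hs => (hderiv s hs).continuousAt.continuousWithinAt)
      (fun s hs => (hderiv s (interior_subset hs)).hasDerivWithinAt)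
      (fun s hs => hderiv_pos s (interior_subset hs))
  simpa [v] using hmono ⟨le_rfl, zero_le_one⟩ ⟨zero_le_one, le_rfl⟩ zero_lt_one

end Monotone

theorem stmt_16_general (m : ℕ) (hm : 2 ≤ m)
    (Γ : Set (Fin m → ℝ)) (f : (Fin m → ℝ) → ℝ)
    (hΓopen : IsOpen Γ) (hΓconv : Convex ℝ Γ)
    (hΓcone : ∀ t : ℝ, 0 < t → ∀ x ∈ Γ, t • x ∈ Γ)
    (hΓpos : {x : Fin m → ℝ | ∀ i, 0 < x i} ⊆ Γ)
    (hfsmooth : ContDiffOn ℝ (⊤ : ℕ∞) f Γ)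
    (hf1 : ∀ x ∈ Γ, ∀ i, 0 < pd f x i)
    (A B : SymMat m)
    (hA : eigVec A ∈ Γ)
    (hBA : ((B : Matrix (Fin m) (Fin m) ℝ) - (A : Matrix (Fin m) (Fin m) ℝ)).PosSemidef) :
    eigVec B ∈ Γ ∧ f (eigVec B) ≥ f (eigVec A) ∧
    (((B : Matrix (Fin m) (Fin m) ℝ) - (A : Matrix (Fin m) (Fin m) ℝ)).PosDef →
      f (eigVec B) > f (eigVec A)) := by
  have hΓ : IsUpperSet Γ := hΓopen.isUpperSet_of_convex_of_smul_mem hΓconv hΓcone hΓpos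
  have hf : StrictMonoOn f Γ :=
    strictMonoOn_of_pd_pos hΓopen hΓ (hfsmooth.differentiableOn (by simp)) hf1
  have hAB : eigVec A ≤ eigVec B := Matrix.IsHermitian.eigenvalues_le_of_posSemidef_sub _ _ hBA
  have hB : eigVec B ∈ Γ := hΓ hAB hA
  refine ⟨hB, hf.monotoneOn hA hB hAB, fun hBA' => hf hA hB ?_⟩
  exact Pi.lt_def.2
    ⟨hAB, ⟨0, by omega⟩, Matrix.IsHermitian.eigenvalues_lt_of_posDef_sub _ _ hBA' _⟩

/-- if `A, B ∈ Sym_m`, `λ(A) ∈ Γ` and `B - A` is positive semidefinite, then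
`λ(B) ∈ Γ` and `f(λ(B)) ≥ f(λ(A))`; if moreover `B - A` is positive definite then the
inequality is strict. -/
theorem stmt_16 (m : ℕ) (hm : 2 ≤ m)
    (Γ : Set (Fin m → ℝ)) (f : (Fin m → ℝ) → ℝ)
    (hΓopen : IsOpen Γ) (hΓconv : Convex ℝ Γ) (hΓne : Γ.Nonempty)
    (hΓproper : Γ ≠ Set.univ)
    (hΓcone : ∀ t : ℝ, 0 < t → ∀ x ∈ Γ, t • x ∈ Γ)
    (hΓperm : ∀ π : Equiv.Perm (Fin m), ∀ x ∈ Γ, x ∘ π ∈ Γ)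
    (hΓpos : {x : Fin m → ℝ | ∀ i, 0 < x i} ⊆ Γ)
    (hfsmooth : ContDiffOn ℝ (⊤ : ℕ∞) f Γ)
    (hfsymm : ∀ π : Equiv.Perm (Fin m), ∀ x ∈ Γ, f (x ∘ π) = f x)
    (hf1 : ∀ x ∈ Γ, ∀ i, 0 < pd f x i)
    (hf2 : ConcaveOn ℝ Γ f)
    (A B : SymMat m)
    (hA : eigVec A ∈ Γ)
    (hBA : ((B : Matrix (Fin m) (Fin m) ℝ) - (A : Matrix (Fin m) (Fin m) ℝ)).PosSemidef) :
    eigVec B ∈ Γ ∧ f (eigVec B) ≥ f (eigVec A) ∧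
    (((B : Matrix (Fin m) (Fin m) ℝ) - (A : Matrix (Fin m) (Fin m) ℝ)).PosDef →
      f (eigVec B) > f (eigVec A)) :=
  stmt_16_general m hm Γ f hΓopen hΓconv hΓcone hΓpos hfsmooth hf1 A B hA hBA
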